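/- For two-sided ideals I, J of the incidence algebra, the set of generators contained in I + J equals the union of the sets of generators contained in I and in J: U(I+J) = U(I) ∪ U(J). -/

import Mathlib

open Classical in
/-- The generator `[xy]` of the incidence algebra over `ℂ`:
the "matrix unit" supported at `(x, y)` (zero unless `x ≤ y`). -/
noncomputable def gen {C : Type*} [PartialOrder C] (x y : C) :
    IncidenceAlgebra ℂ C :=
  ⟨fun a b => if a = x ∧ b = y ∧ x ≤ y then 1 else 0, by
    intro a b hab
    rw [if_neg]
    rintro ⟨rfl, rfl, hxy⟩
    exact hab hxy⟩

open Classical in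
lemma gen_apply {C : Type*} [PartialOrder C] (x y a b : C) :
    gen x y a b = if a = x ∧ b = y ∧ x ≤ y then 1 else 0 := rfl

lemma csmul_apply {C : Type*} [PartialOrder C] (c : ℂ) (f : IncidenceAlgebra ℂ C) (a b : C) :
    (c • f) a b = c * f a b := rfl

open Finset in
/-- Sandwiching an element `f` between `[xx]` and `[yy]` yields `f x y • [xy]`. -/
lemma key {C : Type*} [PartialOrder C] [LocallyFiniteOrder C] [DecidableEq C]
    (f : IncidenceAlgebra ℂ C) (x y : C) (hxy : x ≤ y) :
    gen x x * f * gen y y = f x y • gen x y := by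
  ext a b hab
  simp only [IncidenceAlgebra.mul_apply, gen_apply, le_refl, and_true, mul_ite, mul_one, mul_zero,
    ite_mul, one_mul, zero_mul, csmul_apply]
  by_cases hb : b = y
  · subst hb
    by_cases ha : a = x
    · subst ha
      simp [Finset.sum_ite_eq', Finset.sum_ite_eq, hab, hxy, mem_Icc]
    · simp [ha, Finset.sum_ite_eq', Finset.sum_ite_eq, mem_Icc]
  · simp [hb, fun h : b = y => hb h]

/-- Two-sided ideals of the incidence algebra are closed under scalar multiplication. -/
lemma smul_mem'' {C : Type*} [PartialOrder C] [LocallyFiniteOrder C] [DecidableEq C]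
    (I : TwoSidedIdeal (IncidenceAlgebra ℂ C)) (c : ℂ) {f : IncidenceAlgebra ℂ C}
    (h : f ∈ I) : c • f ∈ I := by
  have : c • f = (c • (1 : IncidenceAlgebra ℂ C)) * f := by rw [smul_mul_assoc, one_mul]
  rw [this]
  exact I.mul_mem_left _ _ h

/-- `U(I + J) = U(I) ∪ U(J)`: a generator lies in the sum of two ideals iff it lies
in one of them. -/
theorem generators_of_sup {C : Type*} [Fintype C] [PartialOrder C] [DecidableEq C] [LocallyFiniteOrder C]
    (I J : TwoSidedIdeal (IncidenceAlgebra ℂ C)) (x y : C) (hxy : x ≤ y) :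
    gen x y ∈ I ⊔ J ↔ gen x y ∈ I ∨ gen x y ∈ J := by
  constructor
  · rw [TwoSidedIdeal.mem_sup]
    rintro ⟨f, hf, g, hg, hsum⟩
    have h1 : f x y + g x y = 1 := by
      have : (f + g) x y = gen x y x y := by rw [hsum]
      simpa [gen_apply, hxy] using this
    by_cases hf0 : f x y = 0
    · right
      have hg1 : g x y = 1 := by rwa [hf0, zero_add] at h1
      have : gen x y = (g x y)⁻¹ • (gen x x * g * gen y y) := by
        rw [key _ _ _ hxy, smul_smul, inv_mul_cancel₀ (by rw [hg1]; norm_num), one_smul]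
      rw [this]
      exact smul_mem'' _ _ (J.mul_mem_right _ _ (J.mul_mem_left _ _ hg))
    · left
      have : gen x y = (f x y)⁻¹ • (gen x x * f * gen y y) := by
        rw [key _ _ _ hxy, smul_smul, inv_mul_cancel₀ hf0, one_smul]
      rw [this]
      exact smul_mem'' _ _ (I.mul_mem_right _ _ (I.mul_mem_left _ _ hf))
  · rintro (h | h)
    exacts [TwoSidedIdeal.mem_sup_left h, TwoSidedIdeal.mem_sup_right h]
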